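/- Let p ≥ 3 be an odd integer and let M₂ be the (p-1)×(p-1) real symmetric matrix with diagonal entries (M₂)ᵢᵢ = 0 for 1 ≤ i ≤ (p+1)/2, (M₂)ᵢᵢ = 2 for (p+1)/2 < i ≤ p-1, and off-diagonal entries (M₂)ᵢ_k = 1 for all i ≠ k. Then M₂ has exactly (p-1)/2 positive eigenvalues and exactly (p-1)/2 negative eigenvalues (counted with multiplicity); in particular the signature of M₂ is 0. -/

import Mathlib

/-!
Writing `M₂ = D + J` with `D` diagonal with entries `∓1` and `J` the all-ones matrix, the matrix
determinant lemma gives `χ(x) = ∏ (x - dᵢ) · (1 - ∑ 1 / (x - dᵢ))` away from `x = ±1`. For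
`p = 2m + 1` this becomes `χ(x) (x - 1) = (x + 1)^m (x - 1)^(m - 1) (x² - 2mx + 1)`; the quadratic
factor has two positive roots (their product is `1`, their sum `2m`). So `χ` has `m` roots `-1`,
and `m` positive roots once the root `1` contributed by `x - 1` is discarded. Multiplying by
`x - 1` avoids a separate case `m = 1`, where `χ` has no root `1` at all.
-/

open Polynomial

/-- The matrix `M₂`: diagonal entries `0` in the first `(p+1)/2` slots, `2` afterwards,
and off-diagonal entries all `1`. -/
noncomputable def Mtwo (p : ℕ) : Matrix (Fin (p - 1)) (Fin (p - 1)) ℝ :=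
  Matrix.of fun i k => if i = k then (if (i : ℕ) < (p + 1) / 2 then (0 : ℝ) else 2) else 1

namespace Matrix

variable {n K : Type*} [Fintype n] [DecidableEq n] [Field K]

theorem det_diagonal_sub_of_one (d : n → K) (hd : ∀ i, d i ≠ 0) :
    (diagonal d - of fun _ _ => 1).det = (∏ i, d i) * (1 - ∑ i, (d i)⁻¹) := by
  have hfac : diagonal d - of (fun _ _ => 1) = diagonal d * (1 +
      (replicateCol Unit (fun i => -(d i)⁻¹) * replicateRow Unit (fun _ => (1 : K)) :
        Matrix n n K)) := by
    ext i j
    rw [Matrix.mul_add, Matrix.mul_one, ← Matrix.mul_assoc]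
    simp [mul_apply, diagonal_apply, hd, sub_eq_add_neg]
  rw [hfac, det_mul, det_diagonal, det_one_add_replicateCol_mul_replicateRow]
  simp [dotProduct, sub_eq_add_neg]

theorem eval_charpoly_diagonal_add_of_one (e : n → K) {x : K} (hx : ∀ i, x ≠ e i) :
    (diagonal e + of fun _ _ => 1).charpoly.eval x =
      (∏ i, (x - e i)) * (1 - ∑ i, (x - e i)⁻¹) := by
  rw [eval_charpoly, ← det_diagonal_sub_of_one _ fun i => sub_ne_zero.2 (hx i), scalar_apply,
    sub_add_eq_sub_sub, ← diagonal_sub]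

end Matrix

@[to_additive]
theorem Fin.prod_ite_val_lt {M : Type*} [CommMonoid M] {n t : ℕ} (ht : t ≤ n) (a b : M) :
    ∏ i : Fin n, (if (i : ℕ) < t then a else b) = a ^ t * b ^ (n - t) := by
  obtain ⟨k, rfl⟩ := Nat.exists_eq_add_of_le ht
  rw [Fin.prod_univ_eq_prod_range (fun i => if i < t then a else b), Finset.prod_range_add]
  simp +contextual [Finset.prod_ite_of_true]

theorem roots_X_sq_sub_C_mul_X_add_one_card_eq_two_and_pos {c : ℝ} (hc : 1 ≤ c) :
    Multiset.card (X ^ 2 - C (2 * c) * X + 1 : ℝ[X]).roots = 2 ∧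
      ∀ x ∈ (X ^ 2 - C (2 * c) * X + 1 : ℝ[X]).roots, 0 < x := by
  set s := √(c ^ 2 - 1)
  have hs : s ^ 2 = c ^ 2 - 1 := Real.sq_sqrt (by nlinarith)
  have hsc : s < c := by nlinarith [Real.sqrt_nonneg (c ^ 2 - 1)]
  have hCs : C c ^ 2 - C s ^ 2 = (1 : ℝ[X]) := by
    rw [← C_pow, ← C_pow, ← C_sub, ← C_1]
    congr 1
    linarith
  have hfac : (X ^ 2 - C (2 * c) * X + 1 : ℝ[X]) = (X - C (c + s)) * (X - C (c - s)) := by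
    simp only [C_add, C_sub, C_mul, C_ofNat]
    linear_combination (-1 : ℝ[X]) * hCs
  rw [hfac, roots_mul (mul_ne_zero (X_sub_C_ne_zero _) (X_sub_C_ne_zero _)), roots_X_sub_C,
    roots_X_sub_C]
  refine ⟨rfl, fun x hx => ?_⟩
  simp only [Multiset.singleton_add, Multiset.mem_cons, Multiset.mem_singleton] at hx
  rcases hx with rfl | rfl <;> nlinarith [Real.sqrt_nonneg (c ^ 2 - 1)]

theorem Mtwo_eq_diagonal_add (p : ℕ) :
    Mtwo p = Matrix.diagonal (fun i : Fin (p - 1) => if (i : ℕ) < (p + 1) / 2 then (-1 : ℝ) else 1)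
      + Matrix.of fun _ _ => 1 := by
  ext i k
  obtain rfl | h := eq_or_ne i k
  · by_cases h' : (i : ℕ) < (p + 1) / 2 <;> norm_num [Mtwo, h']
  · simp [Mtwo, h]

theorem eval_charpoly_Mtwo_mul {m : ℕ} (hm : 1 ≤ m) {x : ℝ} (hx₁ : x ≠ 1) (hx₂ : x ≠ -1) :
    (Mtwo (2 * m + 1)).charpoly.eval x * (x - 1) =
      (x + 1) ^ m * (x - 1) ^ (m - 1) * (x ^ 2 - 2 * m * x + 1) := by
  have hx : ∀ i : Fin (2 * m + 1 - 1), x ≠ if (i : ℕ) < (2 * m + 1 + 1) / 2 then -1 else 1 := by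
    intro i; split_ifs <;> assumption
  have hhalf : (2 * m + 1 + 1) / 2 = m + 1 := by omega
  have hrest : 2 * m + 1 - 1 - (m + 1) = m - 1 := by omega
  rw [Mtwo_eq_diagonal_add, Matrix.eval_charpoly_diagonal_add_of_one _ hx]
  simp only [apply_ite (x - ·), apply_ite Inv.inv]
  rw [Fin.prod_ite_val_lt (by omega), Fin.sum_ite_val_lt (by omega), hhalf, hrest]
  obtain ⟨k, rfl⟩ : ∃ k, m = k + 1 := ⟨m - 1, by omega⟩
  have hx₁' : x - 1 ≠ 0 := sub_ne_zero.2 hx₁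
  have hx₂' : x + 1 ≠ 0 := fun h => hx₂ (by linarith)
  simp only [Nat.add_sub_cancel, nsmul_eq_mul, sub_neg_eq_add]
  push_cast
  field_simp
  ring

theorem charpoly_Mtwo_mul_X_sub_one {m : ℕ} (hm : 1 ≤ m) :
    (Mtwo (2 * m + 1)).charpoly * (X - C 1) =
      (X + C 1) ^ m * (X - C 1) ^ (m - 1) * (X ^ 2 - C (2 * (m : ℝ)) * X + 1) := by
  apply eq_of_infinite_eval_eq
  refine (Set.Finite.infinite_compl (s := {1, -1}) (by simp)).mono fun x hx => ?_
  simp only [Set.mem_compl_iff, Set.mem_insert_iff, Set.mem_singleton_iff, not_or] at hx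
  simp [eval_charpoly_Mtwo_mul hm hx.1 hx.2]

theorem roots_charpoly_Mtwo_add_one {m : ℕ} (hm : 1 ≤ m) :
    (Mtwo (2 * m + 1)).charpoly.roots + {1} =
      m • {-1} + (m - 1) • {1} + (X ^ 2 - C (2 * (m : ℝ)) * X + 1).roots := by
  have key := charpoly_Mtwo_mul_X_sub_one hm
  have hne : (Mtwo (2 * m + 1)).charpoly * (X - C 1) ≠ 0 :=
    mul_ne_zero (Matrix.charpoly_monic _).ne_zero (X_sub_C_ne_zero 1)
  have hroots := congrArg roots key
  rw [roots_mul hne, roots_X_sub_C] at hroots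
  rw [key] at hne
  rw [hroots, roots_mul hne, roots_mul (left_ne_zero_of_mul hne), roots_pow, roots_pow,
    roots_X_add_C, roots_X_sub_C]

theorem Mtwo_signature_zero (p : ℕ) (hp : 3 ≤ p) (hpodd : Odd p) :
    Multiset.card ((Mtwo p).charpoly.roots.filter fun x => 0 < x) = (p - 1) / 2 ∧
      Multiset.card ((Mtwo p).charpoly.roots.filter fun x => x < 0) = (p - 1) / 2 := by
  obtain ⟨m, rfl⟩ := hpodd
  have hm : 1 ≤ m := by omega
  obtain ⟨hcard, hpos⟩ :=
    roots_X_sq_sub_C_mul_X_add_one_card_eq_two_and_pos (c := m) (by exact_mod_cast hm)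
  have hroots := roots_charpoly_Mtwo_add_one hm
  rw [show (2 * m + 1 - 1) / 2 = m by omega]
  constructor
  · have := congrArg (fun s => Multiset.card (s.filter fun x : ℝ => 0 < x)) hroots
    simp only [Multiset.filter_add, Multiset.card_add, Multiset.filter_nsmul, Multiset.card_nsmul,
      Multiset.filter_singleton, Multiset.filter_eq_self.2 hpos, hcard] at this
    norm_num at this
    omega
  · have := congrArg (fun s => Multiset.card (s.filter fun x : ℝ => x < 0)) hroots
    simp only [Multiset.filter_add, Multiset.card_add, Multiset.filter_nsmul, Multiset.card_nsmul,
      Multiset.filter_singleton, Multiset.filter_eq_nil.2 fun x hx => (hpos x hx).not_gt] at this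
    norm_num at this
    omega
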